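/- arXiv:1305.6272 — 7 statements merged into one kernel-verified Lean document; each statement's English description precedes it below -/
import Mathlib

section
/- On the open set {(x,p) ∈ ℝ² : x ≠ 0}, with the canonical Poisson bracket {f,g} = f_x g_p − f_p g_x, the functions h₁ = 4/x, h₂ = xp, h₃ = (p²x³ + b₀x)/4 (b₀ ∈ ℝ constant) satisfy {h₁,h₂} = −h₁, {h₁,h₃} = −2h₂, {h₂,h₃} = −h₃, so they close an sl(2,ℝ) Lie algebra; moreover the quadratic combination h₁h₃ − h₂² equals the constant b₀. -/
/-- The canonical Poisson bracket on ℝ² with coordinates (x,p). -/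
noncomputable def pb (f g : ℝ → ℝ → ℝ) (x p : ℝ) : ℝ :=
  deriv (fun x' => f x' p) x * deriv (fun p' => g x p') p -
    deriv (fun p' => f x p') p * deriv (fun x' => g x' p) x

/-- the Kummer–Schwarz Hamiltonians h₁ = 4/x, h₂ = xp,
h₃ = (p²x³ + b₀x)/4 close the sl(2,ℝ) relations {h₁,h₂} = −h₁, {h₁,h₃} = −2h₂,
{h₂,h₃} = −h₃ on x ≠ 0, and moreover h₁h₃ − h₂² = b₀. -/
theorem kummerSchwarz_sl2_relations (b₀ : ℝ) (x p : ℝ) (hx : x ≠ 0) :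
    pb (fun x _ => 4 / x) (fun x p => x * p) x p = -(4 / x) ∧
    pb (fun x _ => 4 / x) (fun x p => (p ^ 2 * x ^ 3 + b₀ * x) / 4) x p =
      -2 * (x * p) ∧
    pb (fun x p => x * p) (fun x p => (p ^ 2 * x ^ 3 + b₀ * x) / 4) x p =
      -((p ^ 2 * x ^ 3 + b₀ * x) / 4) ∧
    (4 / x) * ((p ^ 2 * x ^ 3 + b₀ * x) / 4) - (x * p) ^ 2 = b₀ := by
  have h₁_x : HasDerivAt (fun x' : ℝ => 4 / x') (4 * -(x ^ 2)⁻¹) x := by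
    simpa only [div_eq_mul_inv] using (hasDerivAt_inv hx).const_mul 4
  have h₁_p : HasDerivAt (fun _ : ℝ => 4 / x) 0 p := hasDerivAt_const p _
  have h₂_x : HasDerivAt (fun x' : ℝ => x' * p) (1 * p) x := (hasDerivAt_id x).mul_const p
  have h₂_p : HasDerivAt (fun p' : ℝ => x * p') (x * 1) p := (hasDerivAt_id p).const_mul x
  have h₃_x : HasDerivAt (fun x' : ℝ => (p ^ 2 * x' ^ 3 + b₀ * x') / 4)
      ((p ^ 2 * (3 * x ^ 2) + b₀ * 1) / 4) x := by
    simpa using (((hasDerivAt_pow 3 x).const_mul (p ^ 2)).add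
      ((hasDerivAt_id x).const_mul b₀)).div_const 4
  have h₃_p : HasDerivAt (fun p' : ℝ => (p' ^ 2 * x ^ 3 + b₀ * x) / 4)
      (2 * p * x ^ 3 / 4) p := by
    simpa using (((hasDerivAt_pow 2 p).mul_const (x ^ 3)).add_const (b₀ * x)).div_const 4
  refine ⟨?_, ?_, ?_, ?_⟩
  · simp only [pb, h₁_x.deriv, h₁_p.deriv, h₂_x.deriv, h₂_p.deriv]; field_simp; ring
  · simp only [pb, h₁_x.deriv, h₁_p.deriv, h₃_x.deriv, h₃_p.deriv]; field_simp; ring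
  · simp only [pb, h₂_x.deriv, h₂_p.deriv, h₃_x.deriv, h₃_p.deriv]; ring
  · field_simp; ring
end

section
/- On the open set O = {(x₁,x₂,x₃,x₄) ∈ ℝ⁴ : xᵢ ≠ xⱼ for i ≠ j}, equip functions with the Poisson bracket induced by the symplectic form ω = dx₁∧dx₂/(x₁−x₂)² + dx₃∧dx₄/(x₃−x₄)². Then the functions h₁ = 1/(x₁−x₂) + 1/(x₃−x₄), h₂ = ((x₁+x₂)/(x₁−x₂) + (x₃+x₄)/(x₃−x₄))/2, h₃ = x₁x₂/(x₁−x₂) + x₃x₄/(x₃−x₄) satisfy {h₁,h₂} = −h₁, {h₁,h₃} = −2h₂, {h₂,h₃} = −h₃, and the function F = h₁h₃ − h₂² equals the cross-ratio (x₁−x₄)(x₂−x₃)/((x₁−x₂)(x₃−x₄)). -/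
noncomputable def d1 (f : ℝ → ℝ → ℝ → ℝ → ℝ) (x₁ x₂ x₃ x₄ : ℝ) : ℝ :=
  deriv (fun y => f y x₂ x₃ x₄) x₁
noncomputable def d2 (f : ℝ → ℝ → ℝ → ℝ → ℝ) (x₁ x₂ x₃ x₄ : ℝ) : ℝ :=
  deriv (fun y => f x₁ y x₃ x₄) x₂
noncomputable def d3 (f : ℝ → ℝ → ℝ → ℝ → ℝ) (x₁ x₂ x₃ x₄ : ℝ) : ℝ :=
  deriv (fun y => f x₁ x₂ y x₄) x₃
noncomputable def d4 (f : ℝ → ℝ → ℝ → ℝ → ℝ) (x₁ x₂ x₃ x₄ : ℝ) : ℝ :=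
  deriv (fun y => f x₁ x₂ x₃ y) x₄

/-- The Poisson bracket induced by ω = dx₁∧dx₂/(x₁−x₂)² + dx₃∧dx₄/(x₃−x₄)²:
{f,g} = (x₁−x₂)²(f_{x₁}g_{x₂} − f_{x₂}g_{x₁}) + (x₃−x₄)²(f_{x₃}g_{x₄} − f_{x₄}g_{x₃}). -/
noncomputable def pb4 (f g : ℝ → ℝ → ℝ → ℝ → ℝ) (x₁ x₂ x₃ x₄ : ℝ) : ℝ :=
  (x₁ - x₂) ^ 2 * (d1 f x₁ x₂ x₃ x₄ * d2 g x₁ x₂ x₃ x₄ -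
      d2 f x₁ x₂ x₃ x₄ * d1 g x₁ x₂ x₃ x₄) +
  (x₃ - x₄) ^ 2 * (d3 f x₁ x₂ x₃ x₄ * d4 g x₁ x₂ x₃ x₄ -
      d4 f x₁ x₂ x₃ x₄ * d3 g x₁ x₂ x₃ x₄)

noncomputable def rh1 (x₁ x₂ x₃ x₄ : ℝ) : ℝ := 1 / (x₁ - x₂) + 1 / (x₃ - x₄)
noncomputable def rh2 (x₁ x₂ x₃ x₄ : ℝ) : ℝ :=
  ((x₁ + x₂) / (x₁ - x₂) + (x₃ + x₄) / (x₃ - x₄)) / 2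
noncomputable def rh3 (x₁ x₂ x₃ x₄ : ℝ) : ℝ :=
  x₁ * x₂ / (x₁ - x₂) + x₃ * x₄ / (x₃ - x₄)

/-- on the set where the xᵢ are pairwise distinct, the Riccati Hamiltonians
satisfy the sl(2,ℝ) relations {h₁,h₂} = −h₁, {h₁,h₃} = −2h₂, {h₂,h₃} = −h₃, and
F = h₁h₃ − h₂² equals the cross-ratio (x₁−x₄)(x₂−x₃)/((x₁−x₂)(x₃−x₄)). -/
theorem riccati_sl2_relations_and_crossratio (x₁ x₂ x₃ x₄ : ℝ)
    (h12 : x₁ ≠ x₂) (h13 : x₁ ≠ x₃) (h14 : x₁ ≠ x₄)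
    (h23 : x₂ ≠ x₃) (h24 : x₂ ≠ x₄) (h34 : x₃ ≠ x₄) :
    pb4 rh1 rh2 x₁ x₂ x₃ x₄ = -(rh1 x₁ x₂ x₃ x₄) ∧
    pb4 rh1 rh3 x₁ x₂ x₃ x₄ = -2 * rh2 x₁ x₂ x₃ x₄ ∧
    pb4 rh2 rh3 x₁ x₂ x₃ x₄ = -(rh3 x₁ x₂ x₃ x₄) ∧
    rh1 x₁ x₂ x₃ x₄ * rh3 x₁ x₂ x₃ x₄ - (rh2 x₁ x₂ x₃ x₄) ^ 2 =
      (x₁ - x₄) * (x₂ - x₃) / ((x₁ - x₂) * (x₃ - x₄)) := by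
  have n12 : x₁ - x₂ ≠ 0 := sub_ne_zero.mpr h12
  have n34 : x₃ - x₄ ≠ 0 := sub_ne_zero.mpr h34
  -- derivatives of rh1
  have a1 : d1 rh1 x₁ x₂ x₃ x₄ = (0 * (x₁ - x₂) - 1 * 1) / (x₁ - x₂) ^ 2 := by
    unfold d1 rh1
    exact (((hasDerivAt_const x₁ (1:ℝ)).div ((hasDerivAt_id x₁).sub_const x₂) n12).add_const _).deriv
  have a2 : d2 rh1 x₁ x₂ x₃ x₄ = (0 * (x₁ - x₂) - 1 * (-1)) / (x₁ - x₂) ^ 2 := by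
    unfold d2 rh1
    exact (((hasDerivAt_const x₂ (1:ℝ)).div ((hasDerivAt_id x₂).const_sub x₁) n12).add_const _).deriv
  have a3 : d3 rh1 x₁ x₂ x₃ x₄ = (0 * (x₃ - x₄) - 1 * 1) / (x₃ - x₄) ^ 2 := by
    unfold d3 rh1
    exact (((hasDerivAt_const x₃ (1:ℝ)).div ((hasDerivAt_id x₃).sub_const x₄) n34).const_add _).deriv
  have a4 : d4 rh1 x₁ x₂ x₃ x₄ = (0 * (x₃ - x₄) - 1 * (-1)) / (x₃ - x₄) ^ 2 := by
    unfold d4 rh1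
    exact (((hasDerivAt_const x₄ (1:ℝ)).div ((hasDerivAt_id x₄).const_sub x₃) n34).const_add _).deriv
  -- derivatives of rh2
  have b1 : d1 rh2 x₁ x₂ x₃ x₄ = (1 * (x₁ - x₂) - (x₁ + x₂) * 1) / (x₁ - x₂) ^ 2 / 2 := by
    unfold d1 rh2
    exact ((((hasDerivAt_id x₁).add_const x₂).div ((hasDerivAt_id x₁).sub_const x₂) n12).add_const _).div_const 2 |>.deriv
  have b2 : d2 rh2 x₁ x₂ x₃ x₄ = (1 * (x₁ - x₂) - (x₁ + x₂) * (-1)) / (x₁ - x₂) ^ 2 / 2 := by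
    unfold d2 rh2
    exact ((((hasDerivAt_id x₂).const_add x₁).div ((hasDerivAt_id x₂).const_sub x₁) n12).add_const _).div_const 2 |>.deriv
  have b3 : d3 rh2 x₁ x₂ x₃ x₄ = (1 * (x₃ - x₄) - (x₃ + x₄) * 1) / (x₃ - x₄) ^ 2 / 2 := by
    unfold d3 rh2
    exact ((((hasDerivAt_id x₃).add_const x₄).div ((hasDerivAt_id x₃).sub_const x₄) n34).const_add _).div_const 2 |>.deriv
  have b4 : d4 rh2 x₁ x₂ x₃ x₄ = (1 * (x₃ - x₄) - (x₃ + x₄) * (-1)) / (x₃ - x₄) ^ 2 / 2 := by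
    unfold d4 rh2
    exact ((((hasDerivAt_id x₄).const_add x₃).div ((hasDerivAt_id x₄).const_sub x₃) n34).const_add _).div_const 2 |>.deriv
  -- derivatives of rh3
  have c1 : d1 rh3 x₁ x₂ x₃ x₄ = (1 * x₂ * (x₁ - x₂) - x₁ * x₂ * 1) / (x₁ - x₂) ^ 2 := by
    unfold d1 rh3
    exact ((((hasDerivAt_id x₁).mul_const x₂).div ((hasDerivAt_id x₁).sub_const x₂) n12).add_const _).deriv
  have c2 : d2 rh3 x₁ x₂ x₃ x₄ = (x₁ * 1 * (x₁ - x₂) - x₁ * x₂ * (-1)) / (x₁ - x₂) ^ 2 := by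
    unfold d2 rh3
    exact ((((hasDerivAt_id x₂).const_mul x₁).div ((hasDerivAt_id x₂).const_sub x₁) n12).add_const _).deriv
  have c3 : d3 rh3 x₁ x₂ x₃ x₄ = (1 * x₄ * (x₃ - x₄) - x₃ * x₄ * 1) / (x₃ - x₄) ^ 2 := by
    unfold d3 rh3
    exact ((((hasDerivAt_id x₃).mul_const x₄).div ((hasDerivAt_id x₃).sub_const x₄) n34).const_add _).deriv
  have c4 : d4 rh3 x₁ x₂ x₃ x₄ = (x₃ * 1 * (x₃ - x₄) - x₃ * x₄ * (-1)) / (x₃ - x₄) ^ 2 := by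
    unfold d4 rh3
    exact ((((hasDerivAt_id x₄).const_mul x₃).div ((hasDerivAt_id x₄).const_sub x₃) n34).const_add _).deriv
  refine ⟨?_, ?_, ?_, ?_⟩
  · unfold pb4; rw [a1, a2, a3, a4, b1, b2, b3, b4]; unfold rh1; field_simp; ring
  · unfold pb4; rw [a1, a2, a3, a4, c1, c2, c3, c4]; unfold rh2; field_simp; ring
  · unfold pb4; rw [b1, b2, b3, b4, c1, c2, c3, c4]; unfold rh3; field_simp; ring
  · unfold rh1 rh2 rh3; field_simp; ring
end

section
/- Let x₁, x₂, x₃ : ℝ → ℝ be three solutions of the Riccati equation dx/dt = a₀(t) + a₁(t)x + a₂(t)x², pairwise distinct at every time, and let k ∈ ℝ be such that the denominators below never vanish. Then x(t) = [x₁(t)(x₃(t)−x₂(t)) + k x₃(t)(x₁(t)−x₂(t))] / [(x₃(t)−x₂(t)) + k(x₁(t)−x₂(t))] is also a solution of the same Riccati equation. -/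
/-!
Write the combination as the weighted mean `x = (p x₁ + q x₃) / (p + q)` with weights
`p = x₃ - x₂` and `q = k (x₁ - x₂)`. The quadratic right-hand side `f` satisfies
`f(λ y + μ z) = λ f(y) + μ f(z) - a₂ λ μ (y - z)²` for `λ + μ = 1`, while differentiating the mean
produces the correction term `(p' q - p q') (x₁ - x₃) / (p + q)²`. The two match because the
difference of two solutions `y, z` obeys the linear equation `(y - z)' = (a₁ + a₂ (y + z)) (y - z)`,
so the logarithmic derivatives of `p` and `q` differ by `a₂ (x₃ - x₁)`.
-/

section Riccati

variable (a₀ a₁ a₂ : ℝ → ℝ)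

def riccatiField (t y : ℝ) : ℝ := a₀ t + a₁ t * y + a₂ t * y ^ 2

theorem riccatiField_sub (t y z : ℝ) :
    riccatiField a₀ a₁ a₂ t y - riccatiField a₀ a₁ a₂ t z = (a₁ t + a₂ t * (y + z)) * (y - z) := by
  unfold riccatiField
  ring

theorem riccatiField_weightedMean {t p q : ℝ} (y z : ℝ) (hpq : p + q ≠ 0) :
    riccatiField a₀ a₁ a₂ t ((p * y + q * z) / (p + q)) =
      (p * riccatiField a₀ a₁ a₂ t y + q * riccatiField a₀ a₁ a₂ t z) / (p + q) -
        a₂ t * p * q * (y - z) ^ 2 / (p + q) ^ 2 := by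
  unfold riccatiField
  field_simp
  ring

end Riccati

theorem HasDerivAt.weightedMean {p q y z : ℝ → ℝ} {p' q' y' z' t : ℝ} (hp : HasDerivAt p p' t)
    (hq : HasDerivAt q q' t) (hy : HasDerivAt y y' t) (hz : HasDerivAt z z' t)
    (hpq : p t + q t ≠ 0) :
    HasDerivAt (fun s => (p s * y s + q s * z s) / (p s + q s))
      ((p t * y' + q t * z') / (p t + q t) + (p' * q t - p t * q') * (y t - z t) / (p t + q t) ^ 2)
      t := by
  refine (((hp.mul hy).add (hq.mul hz)).div (hp.add hq) hpq).congr_deriv ?_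
  simp only [Pi.add_apply, Pi.mul_apply]
  field_simp
  ring

section RiccatiSolutions

variable {a₀ a₁ a₂ y z : ℝ → ℝ} {t : ℝ}

theorem HasDerivAt.riccati_sub (hy : HasDerivAt y (riccatiField a₀ a₁ a₂ t (y t)) t)
    (hz : HasDerivAt z (riccatiField a₀ a₁ a₂ t (z t)) t) :
    HasDerivAt (fun s => y s - z s) ((a₁ t + a₂ t * (y t + z t)) * (y t - z t)) t :=
  riccatiField_sub a₀ a₁ a₂ t (y t) (z t) ▸ hy.sub hz

theorem HasDerivAt.riccati_weightedMean {p q : ℝ → ℝ} {p' q' : ℝ}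
    (hy : HasDerivAt y (riccatiField a₀ a₁ a₂ t (y t)) t)
    (hz : HasDerivAt z (riccatiField a₀ a₁ a₂ t (z t)) t)
    (hp : HasDerivAt p p' t) (hq : HasDerivAt q q' t) (hpq : p t + q t ≠ 0)
    (hweights : p' * q t - p t * q' = a₂ t * p t * q t * (z t - y t)) :
    HasDerivAt (fun s => (p s * y s + q s * z s) / (p s + q s))
      (riccatiField a₀ a₁ a₂ t ((p t * y t + q t * z t) / (p t + q t))) t := by
  refine (hp.weightedMean hq hy hz hpq).congr_deriv ?_
  rw [hweights, riccatiField_weightedMean a₀ a₁ a₂ (y t) (z t) hpq]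
  ring

end RiccatiSolutions

theorem riccati_superposition_rule_general
    (a₀ a₁ a₂ : ℝ → ℝ)
    (x₁ x₂ x₃ : ℝ → ℝ)
    (hx₁ : ∀ t, HasDerivAt x₁ (a₀ t + a₁ t * x₁ t + a₂ t * (x₁ t) ^ 2) t)
    (hx₂ : ∀ t, HasDerivAt x₂ (a₀ t + a₁ t * x₂ t + a₂ t * (x₂ t) ^ 2) t)
    (hx₃ : ∀ t, HasDerivAt x₃ (a₀ t + a₁ t * x₃ t + a₂ t * (x₃ t) ^ 2) t)
    (k : ℝ)
    (hden : ∀ t, (x₃ t - x₂ t) + k * (x₁ t - x₂ t) ≠ 0)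
    (x : ℝ → ℝ)
    (hx : ∀ t, x t = (x₁ t * (x₃ t - x₂ t) + k * x₃ t * (x₁ t - x₂ t)) /
        ((x₃ t - x₂ t) + k * (x₁ t - x₂ t))) :
    ∀ t, HasDerivAt x (a₀ t + a₁ t * x t + a₂ t * (x t) ^ 2) t := by
  have hx_mean : x = fun s => ((x₃ s - x₂ s) * x₁ s + k * (x₁ s - x₂ s) * x₃ s) /
      ((x₃ s - x₂ s) + k * (x₁ s - x₂ s)) := funext fun s => by rw [hx]; ring
  intro t
  have h₃₂ := (hx₃ t).riccati_sub (hx₂ t)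
  have h₁₂ := ((hx₁ t).riccati_sub (hx₂ t)).const_mul k
  rw [hx_mean]
  exact (hx₁ t).riccati_weightedMean (hx₃ t) h₃₂ h₁₂ (hden t) (by ring)

/-- superposition rule for Riccati equations. Given three solutions of
x' = a₀(t) + a₁(t)x + a₂(t)x², pairwise distinct at every time, and a constant k for which
the denominator never vanishes, the combination
x = (x₁(x₃−x₂) + k x₃(x₁−x₂)) / ((x₃−x₂) + k(x₁−x₂)) is again a solution. -/
theorem riccati_superposition_rule
    (a₀ a₁ a₂ : ℝ → ℝ) (ha₀ : Continuous a₀) (ha₁ : Continuous a₁) (ha₂ : Continuous a₂)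
    (x₁ x₂ x₃ : ℝ → ℝ)
    (hx₁ : ∀ t, HasDerivAt x₁ (a₀ t + a₁ t * x₁ t + a₂ t * (x₁ t) ^ 2) t)
    (hx₂ : ∀ t, HasDerivAt x₂ (a₀ t + a₁ t * x₂ t + a₂ t * (x₂ t) ^ 2) t)
    (hx₃ : ∀ t, HasDerivAt x₃ (a₀ t + a₁ t * x₃ t + a₂ t * (x₃ t) ^ 2) t)
    (hdist : ∀ t, x₁ t ≠ x₂ t ∧ x₁ t ≠ x₃ t ∧ x₂ t ≠ x₃ t)
    (k : ℝ)
    (hden : ∀ t, (x₃ t - x₂ t) + k * (x₁ t - x₂ t) ≠ 0)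
    (x : ℝ → ℝ)
    (hx : ∀ t, x t = (x₁ t * (x₃ t - x₂ t) + k * x₃ t * (x₁ t - x₂ t)) /
        ((x₃ t - x₂ t) + k * (x₁ t - x₂ t))) :
    ∀ t, HasDerivAt x (a₀ t + a₁ t * x t + a₂ t * (x t) ^ 2) t :=
  riccati_superposition_rule_general a₀ a₁ a₂ x₁ x₂ x₃ hx₁ hx₂ hx₃ k hden x hx
end

section
/- Let x₁, x₂, x₃, x₄ : ℝ → ℝ be four solutions of the Riccati equation dx/dt = a₀(t) + a₁(t)x + a₂(t)x², pairwise distinct at each time. Then the cross-ratio F(t) = (x₁(t)−x₄(t))(x₂(t)−x₃(t)) / ((x₁(t)−x₂(t))(x₃(t)−x₄(t))) is constant in t (its derivative vanishes identically). -/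
/-!
The difference of two solutions of `x' = a₀ + a₁ x + a₂ x²` satisfies
`(xᵢ - xⱼ)' = (xᵢ - xⱼ) (a₁ + a₂ (xᵢ + xⱼ))`. Logarithmic derivatives add over products, so
numerator and denominator of the cross-ratio both have logarithmic derivative
`2 a₁ + a₂ (x₁ + x₂ + x₃ + x₄)`, and their quotient has derivative zero.
-/

section LogDeriv

variable {𝕜 𝕜' : Type*} [NontriviallyNormedField 𝕜] [NontriviallyNormedField 𝕜']
  [NormedAlgebra 𝕜 𝕜'] {f g : 𝕜 → 𝕜'} {p q : 𝕜'} {t : 𝕜}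

theorem HasDerivAt.mul_of_logDeriv (hf : HasDerivAt f (f t * p) t)
    (hg : HasDerivAt g (g t * q) t) :
    HasDerivAt (fun s => f s * g s) (f t * g t * (p + q)) t :=
  (hf.mul hg).congr_deriv (by ring)

theorem HasDerivAt.div_zero_of_logDeriv (hf : HasDerivAt f (f t * p) t)
    (hg : HasDerivAt g (g t * p) t) (hg₀ : g t ≠ 0) :
    HasDerivAt (fun s => f s / g s) 0 t :=
  (hf.div hg hg₀).congr_deriv (by ring)

end LogDeriv

theorem hasDerivAt_sub_of_riccati {𝕜 : Type*} [NontriviallyNormedField 𝕜] {x y : 𝕜 → 𝕜}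
    {a₀ a₁ a₂ t : 𝕜} (hx : HasDerivAt x (a₀ + a₁ * x t + a₂ * x t ^ 2) t)
    (hy : HasDerivAt y (a₀ + a₁ * y t + a₂ * y t ^ 2) t) :
    HasDerivAt (fun s => x s - y s) ((x t - y t) * (a₁ + a₂ * (x t + y t))) t :=
  (hx.sub hy).congr_deriv (by ring)

theorem riccati_crossratio_constant_general
    (a₀ a₁ a₂ : ℝ → ℝ)
    (x₁ x₂ x₃ x₄ : ℝ → ℝ)
    (hx₁ : ∀ t, HasDerivAt x₁ (a₀ t + a₁ t * x₁ t + a₂ t * (x₁ t) ^ 2) t)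
    (hx₂ : ∀ t, HasDerivAt x₂ (a₀ t + a₁ t * x₂ t + a₂ t * (x₂ t) ^ 2) t)
    (hx₃ : ∀ t, HasDerivAt x₃ (a₀ t + a₁ t * x₃ t + a₂ t * (x₃ t) ^ 2) t)
    (hx₄ : ∀ t, HasDerivAt x₄ (a₀ t + a₁ t * x₄ t + a₂ t * (x₄ t) ^ 2) t)
    (hdist : ∀ t, x₁ t ≠ x₂ t ∧ x₁ t ≠ x₃ t ∧ x₁ t ≠ x₄ t ∧
      x₂ t ≠ x₃ t ∧ x₂ t ≠ x₄ t ∧ x₃ t ≠ x₄ t)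
    (F : ℝ → ℝ)
    (hF : ∀ t, F t = (x₁ t - x₄ t) * (x₂ t - x₃ t) /
        ((x₁ t - x₂ t) * (x₃ t - x₄ t))) :
    ∀ t, HasDerivAt F 0 t := by
  intro t
  obtain ⟨h₁₂, -, -, -, -, h₃₄⟩ := hdist t
  have hnum := (hasDerivAt_sub_of_riccati (hx₁ t) (hx₄ t)).mul_of_logDeriv
    (hasDerivAt_sub_of_riccati (hx₂ t) (hx₃ t))
  have hden := (hasDerivAt_sub_of_riccati (hx₁ t) (hx₂ t)).mul_of_logDeriv
    (hasDerivAt_sub_of_riccati (hx₃ t) (hx₄ t))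
  rw [funext hF]
  exact hnum.div_zero_of_logDeriv (hden.congr_deriv (by ring))
    (mul_ne_zero (sub_ne_zero.2 h₁₂) (sub_ne_zero.2 h₃₄))

/-- the cross-ratio of four pairwise distinct solutions of a Riccati
equation is constant in time. -/
theorem riccati_crossratio_constant
    (a₀ a₁ a₂ : ℝ → ℝ) (ha₀ : Continuous a₀) (ha₁ : Continuous a₁) (ha₂ : Continuous a₂)
    (x₁ x₂ x₃ x₄ : ℝ → ℝ)
    (hx₁ : ∀ t, HasDerivAt x₁ (a₀ t + a₁ t * x₁ t + a₂ t * (x₁ t) ^ 2) t)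
    (hx₂ : ∀ t, HasDerivAt x₂ (a₀ t + a₁ t * x₂ t + a₂ t * (x₂ t) ^ 2) t)
    (hx₃ : ∀ t, HasDerivAt x₃ (a₀ t + a₁ t * x₃ t + a₂ t * (x₃ t) ^ 2) t)
    (hx₄ : ∀ t, HasDerivAt x₄ (a₀ t + a₁ t * x₄ t + a₂ t * (x₄ t) ^ 2) t)
    (hdist : ∀ t, x₁ t ≠ x₂ t ∧ x₁ t ≠ x₃ t ∧ x₁ t ≠ x₄ t ∧
      x₂ t ≠ x₃ t ∧ x₂ t ≠ x₄ t ∧ x₃ t ≠ x₄ t)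
    (F : ℝ → ℝ)
    (hF : ∀ t, F t = (x₁ t - x₄ t) * (x₂ t - x₃ t) /
        ((x₁ t - x₂ t) * (x₃ t - x₄ t))) :
    ∀ t, HasDerivAt F 0 t :=
  riccati_crossratio_constant_general a₀ a₁ a₂ x₁ x₂ x₃ x₄ hx₁ hx₂ hx₃ hx₄ hdist F hF
end

section
/- Consider the Ermakov system x'' = −ω(t)²x + b/x³, y'' = −ω(t)²y, with b ∈ ℝ constant and x(t) ≠ 0. Then the Lewis–Riesenfeld invariant F(t) = (y(t)x'(t) − x(t)y'(t))² + b(1 + y(t)²/x(t)²) is a constant of motion: dF/dt = 0 along any pair of solutions (x,y). -/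
/-!
Along the Ermakov system the Wronskian-like quantity `W = y x' − x y'` satisfies `W' = b y / x³`,
the `ω²` terms cancelling, while `(y / x)²` has derivative `−2 y W / x³`. Hence the two summands of
`F = W² + b (1 + y² / x²)` have opposite derivatives `2 b y W / x³` and `−2 b y W / x³`.
-/

section ErmakovSystem

variable {x y vx vy q : ℝ → ℝ} {b t : ℝ}

theorem hasDerivAt_ermakov_wronskian
    (hx : HasDerivAt x (vx t) t) (hy : HasDerivAt y (vy t) t)
    (hvx : HasDerivAt vx (-q t * x t + b / x t ^ 3) t)
    (hvy : HasDerivAt vy (-q t * y t) t) :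
    HasDerivAt (fun s => y s * vx s - x s * vy s) (b * y t / x t ^ 3) t :=
  ((hy.mul hvx).sub (hx.mul hvy)).congr_deriv (by ring)

theorem hasDerivAt_sq_div_sq (hx0 : x t ≠ 0)
    (hx : HasDerivAt x (vx t) t) (hy : HasDerivAt y (vy t) t) :
    HasDerivAt (fun s => y s ^ 2 / x s ^ 2)
      (-2 * y t * (y t * vx t - x t * vy t) / x t ^ 3) t := by
  refine ((hy.fun_pow 2).div (hx.fun_pow 2) (pow_ne_zero 2 hx0)).congr_deriv ?_
  field_simp
  ring

end ErmakovSystem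

theorem ermakov_lewis_riesenfeld_invariant_general
    (ω : ℝ → ℝ) (b : ℝ)
    (x y vx vy : ℝ → ℝ)
    (hx0 : ∀ t, x t ≠ 0)
    (hx : ∀ t, HasDerivAt x (vx t) t)
    (hy : ∀ t, HasDerivAt y (vy t) t)
    (hvx : ∀ t, HasDerivAt vx (-(ω t) ^ 2 * x t + b / (x t) ^ 3) t)
    (hvy : ∀ t, HasDerivAt vy (-(ω t) ^ 2 * y t) t)
    (F : ℝ → ℝ)
    (hF : ∀ t, F t = (y t * vx t - x t * vy t) ^ 2 + b * (1 + (y t) ^ 2 / (x t) ^ 2)) :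
    ∀ t, HasDerivAt F 0 t := by
  intro t
  have hW := hasDerivAt_ermakov_wronskian (q := fun s => ω s ^ 2) (hx t) (hy t) (hvx t) (hvy t)
  have hratio := hasDerivAt_sq_div_sq (hx0 t) (hx t) (hy t)
  rw [funext hF]
  exact ((hW.fun_pow 2).add (((hasDerivAt_const t 1).add hratio).const_mul b)).congr_deriv
    (by ring)

/-- the Lewis–Riesenfeld invariant
F = (y x' − x y')² + b(1 + y²/x²) is a constant of motion of the Ermakov system
x'' = −ω(t)²x + b/x³, y'' = −ω(t)²y (x nowhere vanishing). -/
theorem ermakov_lewis_riesenfeld_invariant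
    (ω : ℝ → ℝ) (hω : Continuous ω) (b : ℝ)
    (x y vx vy : ℝ → ℝ)
    (hx0 : ∀ t, x t ≠ 0)
    (hx : ∀ t, HasDerivAt x (vx t) t)
    (hy : ∀ t, HasDerivAt y (vy t) t)
    (hvx : ∀ t, HasDerivAt vx (-(ω t) ^ 2 * x t + b / (x t) ^ 3) t)
    (hvy : ∀ t, HasDerivAt vy (-(ω t) ^ 2 * y t) t)
    (F : ℝ → ℝ)
    (hF : ∀ t, F t = (y t * vx t - x t * vy t) ^ 2 + b * (1 + (y t) ^ 2 / (x t) ^ 2)) :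
    ∀ t, HasDerivAt F 0 t :=
  ermakov_lewis_riesenfeld_invariant_general ω b x y vx vy hx0 hx hy hvx hvy F hF
end

section
/- Let x, y : ℝ → ℝ be two solutions of the Milne–Pinney-type system x' = p_x, p_x' = −ω(t)²x + b/x³ (i.e. second-order x'' = −ω(t)²x + b/x³) with x, y nowhere vanishing. Then F(t) = (1/4)(x(t)y'(t) − y(t)x'(t))² + (b/4)(x(t)² + y(t)²)²/(x(t)²y(t)²) is constant in t. -/
/-!
With `W = x y' - y x'`, the `ω²`-terms cancel in `W' = x y'' - y x''`, leaving `W' = b (x/y³ - y/x³)`,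
while `(x² + y²)² / (x² y²) = x²/y² + 2 + y²/x²` has derivative `2 (y/x³ - x/y³) W`.
Hence `F' = (W/2) W' + (b/2) (y/x³ - x/y³) W = 0`.
-/

section

variable {x y vx vy : ℝ → ℝ} {t : ℝ}

theorem hasDerivAt_wronskian {ax ay : ℝ} (hx : HasDerivAt x (vx t) t) (hy : HasDerivAt y (vy t) t)
    (hvx : HasDerivAt vx ax t) (hvy : HasDerivAt vy ay t) :
    HasDerivAt (fun s => x s * vy s - y s * vx s) (x t * ay - y t * ax) t := by
  refine ((hx.mul hvy).sub (hy.mul hvx)).congr_deriv ?_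
  ring

theorem hasDerivAt_sq_add_sq_sq_div_sq_mul_sq (hx : HasDerivAt x (vx t) t)
    (hy : HasDerivAt y (vy t) t) (hx0 : x t ≠ 0) (hy0 : y t ≠ 0) :
    HasDerivAt (fun s => (x s ^ 2 + y s ^ 2) ^ 2 / (x s ^ 2 * y s ^ 2))
      (2 * (y t / x t ^ 3 - x t / y t ^ 3) * (x t * vy t - y t * vx t)) t := by
  have hden : x t ^ 2 * y t ^ 2 ≠ 0 := by positivity
  refine ((((hx.pow 2).add (hy.pow 2)).pow 2).div ((hx.pow 2).mul (hy.pow 2)) hden).congr_deriv ?_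
  simp only [Pi.add_apply, Pi.mul_apply, Pi.pow_apply]
  field_simp
  ring

end

theorem milnePinney_first_integral_general
    (ω : ℝ → ℝ) (b : ℝ)
    (x y vx vy : ℝ → ℝ)
    (hx0 : ∀ t, x t ≠ 0) (hy0 : ∀ t, y t ≠ 0)
    (hx : ∀ t, HasDerivAt x (vx t) t)
    (hy : ∀ t, HasDerivAt y (vy t) t)
    (hvx : ∀ t, HasDerivAt vx (-(ω t) ^ 2 * x t + b / (x t) ^ 3) t)
    (hvy : ∀ t, HasDerivAt vy (-(ω t) ^ 2 * y t + b / (y t) ^ 3) t)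
    (F : ℝ → ℝ)
    (hF : ∀ t, F t = (1 / 4) * (x t * vy t - y t * vx t) ^ 2 +
        (b / 4) * ((x t) ^ 2 + (y t) ^ 2) ^ 2 / ((x t) ^ 2 * (y t) ^ 2)) :
    ∀ t, HasDerivAt F 0 t := by
  intro t
  have hW := hasDerivAt_wronskian (hx t) (hy t) (hvx t) (hvy t)
  have hG := hasDerivAt_sq_add_sq_sq_div_sq_mul_sq (hx t) (hy t) (hx0 t) (hy0 t)
  have hF' : F = fun s => 1 / 4 * (x s * vy s - y s * vx s) ^ 2 +
      b / 4 * ((x s ^ 2 + y s ^ 2) ^ 2 / (x s ^ 2 * y s ^ 2)) := by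
    funext s
    rw [hF, mul_div_assoc]
  rw [hF']
  refine (((hW.pow 2).const_mul (1 / 4)).add (hG.const_mul (b / 4))).congr_deriv ?_
  ring

/-- for two nowhere-vanishing solutions x, y of the Milne–Pinney equation
z'' = −ω(t)²z + b/z³, the function
F = (1/4)(x y' − y x')² + (b/4)(x² + y²)²/(x²y²) is constant in t. -/
theorem milnePinney_first_integral
    (ω : ℝ → ℝ) (hω : Continuous ω) (b : ℝ)
    (x y vx vy : ℝ → ℝ)
    (hx0 : ∀ t, x t ≠ 0) (hy0 : ∀ t, y t ≠ 0)
    (hx : ∀ t, HasDerivAt x (vx t) t)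
    (hy : ∀ t, HasDerivAt y (vy t) t)
    (hvx : ∀ t, HasDerivAt vx (-(ω t) ^ 2 * x t + b / (x t) ^ 3) t)
    (hvy : ∀ t, HasDerivAt vy (-(ω t) ^ 2 * y t + b / (y t) ^ 3) t)
    (F : ℝ → ℝ)
    (hF : ∀ t, F t = (1 / 4) * (x t * vy t - y t * vx t) ^ 2 +
        (b / 4) * ((x t) ^ 2 + (y t) ^ 2) ^ 2 / ((x t) ^ 2 * (y t) ^ 2)) :
    ∀ t, HasDerivAt F 0 t :=
  milnePinney_first_integral_general ω b x y vx vy hx0 hy0 hx hy hvx hvy F hF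
end

section
/- Let (x₁,p₁), (x₂,p₂) : ℝ → ℝ² be two solutions of the Hamiltonian Kummer–Schwarz system x' = p x³/2, p' = −3p²x²/4 − b₀/4 + 4b₁(t)/x², with x₁, x₂ nowhere vanishing. Then F(t) = [b₀(x₁(t)+x₂(t))² + (p₁(t)x₁(t)² − p₂(t)x₂(t)²)²] / (x₁(t)x₂(t)) is constant in t. -/
/-!
In the variable `u = p x²` the system becomes `x' = u x / 2`, `u' = (u² - b₀ x²) / 4 + 4 b₁`,
in which `b₁` enters only additively in `u'`. Along two solutions with the same `b₁` the
numerator `N = b₀ (x₁ + x₂)² + (u₁ - u₂)²` then satisfies `N' = N (u₁ + u₂) / 2`, which is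
exactly the logarithmic derivative of the denominator `x₁ x₂`, so `N / (x₁ x₂)` is constant.
-/

theorem hasDerivAt_mul_sq_of_kummerSchwarz {x p : ℝ → ℝ} {b₀ c t : ℝ} (hx0 : x t ≠ 0)
    (hx : HasDerivAt x (p t * x t ^ 3 / 2) t)
    (hp : HasDerivAt p (-3 * p t ^ 2 * x t ^ 2 / 4 - b₀ / 4 + 4 * c / x t ^ 2) t) :
    HasDerivAt (fun s => p s * x s ^ 2) (((p t * x t ^ 2) ^ 2 - b₀ * x t ^ 2) / 4 + 4 * c) t := by
  refine (hp.mul (hx.pow 2)).congr_deriv ?_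
  simp only [Pi.pow_apply]
  field_simp
  ring

theorem hasDerivAt_invariant_of_reducedKummerSchwarz {x₁ u₁ x₂ u₂ : ℝ → ℝ} {b₀ c t : ℝ}
    (hx₁0 : x₁ t ≠ 0) (hx₂0 : x₂ t ≠ 0)
    (hx₁ : HasDerivAt x₁ (u₁ t * x₁ t / 2) t)
    (hu₁ : HasDerivAt u₁ ((u₁ t ^ 2 - b₀ * x₁ t ^ 2) / 4 + c) t)
    (hx₂ : HasDerivAt x₂ (u₂ t * x₂ t / 2) t)
    (hu₂ : HasDerivAt u₂ ((u₂ t ^ 2 - b₀ * x₂ t ^ 2) / 4 + c) t) :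
    HasDerivAt (fun s => (b₀ * (x₁ s + x₂ s) ^ 2 + (u₁ s - u₂ s) ^ 2) / (x₁ s * x₂ s)) 0 t := by
  refine ((((hx₁.add hx₂).pow 2).const_mul b₀ |>.add ((hu₁.sub hu₂).pow 2)).div
    (hx₁.mul hx₂) (mul_ne_zero hx₁0 hx₂0)).congr_deriv ?_
  simp only [Pi.add_apply, Pi.sub_apply, Pi.mul_apply, Pi.pow_apply]
  field_simp
  ring

theorem kummerSchwarz_first_integral_general
    (b₀ : ℝ) (b₁ : ℝ → ℝ)
    (x₁ p₁ x₂ p₂ : ℝ → ℝ)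
    (hx₁0 : ∀ t, x₁ t ≠ 0) (hx₂0 : ∀ t, x₂ t ≠ 0)
    (hx₁ : ∀ t, HasDerivAt x₁ (p₁ t * (x₁ t) ^ 3 / 2) t)
    (hp₁ : ∀ t, HasDerivAt p₁
      (-3 * (p₁ t) ^ 2 * (x₁ t) ^ 2 / 4 - b₀ / 4 + 4 * b₁ t / (x₁ t) ^ 2) t)
    (hx₂ : ∀ t, HasDerivAt x₂ (p₂ t * (x₂ t) ^ 3 / 2) t)
    (hp₂ : ∀ t, HasDerivAt p₂
      (-3 * (p₂ t) ^ 2 * (x₂ t) ^ 2 / 4 - b₀ / 4 + 4 * b₁ t / (x₂ t) ^ 2) t)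
    (F : ℝ → ℝ)
    (hF : ∀ t, F t = (b₀ * (x₁ t + x₂ t) ^ 2 +
        (p₁ t * (x₁ t) ^ 2 - p₂ t * (x₂ t) ^ 2) ^ 2) / (x₁ t * x₂ t)) :
    ∀ t, HasDerivAt F 0 t := by
  intro t
  rw [funext hF]
  exact hasDerivAt_invariant_of_reducedKummerSchwarz (hx₁0 t) (hx₂0 t)
    ((hx₁ t).congr_deriv (by ring)) (hasDerivAt_mul_sq_of_kummerSchwarz (hx₁0 t) (hx₁ t) (hp₁ t))
    ((hx₂ t).congr_deriv (by ring)) (hasDerivAt_mul_sq_of_kummerSchwarz (hx₂0 t) (hx₂ t) (hp₂ t))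

/-- for two solutions (x₁,p₁), (x₂,p₂) of the Hamiltonian Kummer–Schwarz
system x' = p x³/2, p' = −3p²x²/4 − b₀/4 + 4b₁(t)/x² (with x₁, x₂ nowhere vanishing), the
function F = (b₀(x₁+x₂)² + (p₁x₁² − p₂x₂²)²)/(x₁x₂) is constant in t. -/
theorem kummerSchwarz_first_integral
    (b₀ : ℝ) (b₁ : ℝ → ℝ) (hb₁ : Continuous b₁)
    (x₁ p₁ x₂ p₂ : ℝ → ℝ)
    (hx₁0 : ∀ t, x₁ t ≠ 0) (hx₂0 : ∀ t, x₂ t ≠ 0)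
    (hx₁ : ∀ t, HasDerivAt x₁ (p₁ t * (x₁ t) ^ 3 / 2) t)
    (hp₁ : ∀ t, HasDerivAt p₁
      (-3 * (p₁ t) ^ 2 * (x₁ t) ^ 2 / 4 - b₀ / 4 + 4 * b₁ t / (x₁ t) ^ 2) t)
    (hx₂ : ∀ t, HasDerivAt x₂ (p₂ t * (x₂ t) ^ 3 / 2) t)
    (hp₂ : ∀ t, HasDerivAt p₂
      (-3 * (p₂ t) ^ 2 * (x₂ t) ^ 2 / 4 - b₀ / 4 + 4 * b₁ t / (x₂ t) ^ 2) t)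
    (F : ℝ → ℝ)
    (hF : ∀ t, F t = (b₀ * (x₁ t + x₂ t) ^ 2 +
        (p₁ t * (x₁ t) ^ 2 - p₂ t * (x₂ t) ^ 2) ^ 2) / (x₁ t * x₂ t)) :
    ∀ t, HasDerivAt F 0 t :=
  kummerSchwarz_first_integral_general b₀ b₁ x₁ p₁ x₂ p₂ hx₁0 hx₂0 hx₁ hp₁ hx₂ hp₂ F hF
end
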